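/- The Tisseur–Higham characterisation of pseudospectra: for an n×n matrix polynomial P(λ), weight function w, and ε ≥ 0, a point μ ∈ ℂ satisfies s_n(μ) ≤ ε w(|μ|) (where s_n(μ) is the smallest singular value of the matrix P(μ)) if and only if there exist matrices Δ_0, ..., Δ_m with ‖Δ_j‖ ≤ ε w_j for every j such that det(Σ_{j=0}^m (P_j + Δ_j) μ^j) = 0. -/

import Mathlib

open Matrix Finset

/-- The singular values of a complex `N × N` matrix, arranged in decreasing order:
`svals A 0 ≥ svals A 1 ≥ ... ≥ svals A (N-1)`; that is, `svals A ⟨j-1,_⟩` is the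
paper's `s_j(A)`, the nonnegative square roots of the eigenvalues of `Aᴴ * A`. -/
noncomputable def svals {N : ℕ} (A : Matrix (Fin N) (Fin N) ℂ) : Fin N → ℝ :=
  fun i =>
    Real.sqrt ((Matrix.isHermitian_conjTranspose_mul_self A).eigenvalues
      (Tuple.sort ((Matrix.isHermitian_conjTranspose_mul_self A).eigenvalues) i.rev))

/-- The smallest singular value `s_n(A)` of a complex `(N+1) × (N+1)` matrix. -/
noncomputable def sMin {N : ℕ} (A : Matrix (Fin (N + 1)) (Fin (N + 1)) ℂ) : ℝ :=
  svals A (Fin.last N)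

/-- The spectral norm of a matrix: the operator norm induced by the Euclidean vector norm. -/
noncomputable def specNorm {N : ℕ} (A : Matrix (Fin N) (Fin N) ℂ) : ℝ :=
  ‖Matrix.toEuclideanCLM (𝕜 := ℂ) A‖

/-- Euclidean norm of a vector in `ℂ^N`. -/
noncomputable def enorm' {N : ℕ} (x : Fin N → ℂ) : ℝ :=
  ‖(WithLp.equiv 2 (Fin N → ℂ)).symm x‖

/-- Evaluation of the matrix polynomial `P(z) = Σ_{j=0}^m P_j z^j`. -/
noncomputable def polyEval {N m : ℕ} (P : Fin (m + 1) → Matrix (Fin N) (Fin N) ℂ) (z : ℂ) :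
    Matrix (Fin N) (Fin N) ℂ :=
  ∑ j : Fin (m + 1), z ^ (j : ℕ) • P j

/-- Evaluation of the derivative `P'(z) = Σ_{j=1}^m j P_j z^{j-1}`. -/
noncomputable def polyDerivEval {N m : ℕ} (P : Fin (m + 1) → Matrix (Fin N) (Fin N) ℂ)
    (z : ℂ) : Matrix (Fin N) (Fin N) ℂ :=
  ∑ j : Fin (m + 1), (((j : ℕ) : ℂ) * z ^ ((j : ℕ) - 1)) • P j

/-- Evaluation of the weight polynomial `w(x) = Σ_{j=0}^m w_j x^j`. -/
noncomputable def wEval {m : ℕ} (w : Fin (m + 1) → ℝ) (x : ℝ) : ℝ :=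
  ∑ j : Fin (m + 1), w j * x ^ (j : ℕ)

/-!
The smallest singular value is the distance to singularity: `s_n(A) ‖x‖ ≤ ‖A x‖` for all `x`, so a
singular `A + E` forces `‖E‖ ≥ s_n(A)`, while the rank-one `E = -(A x) x*` built from a unit vector
`x` with `‖A x‖ = s_n(A)` attains this bound. Since `Σ (P_j + Δ_j) μ^j = P(μ) + E` with
`E = Σ μ^j Δ_j`, it remains to see that such an `E` comes from `Δ_j` with `‖Δ_j‖ ≤ ε w_j` exactly
when `‖E‖ ≤ ε w(|μ|)`: one direction is the triangle inequality; for the other, `Δ_j` takes the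
share `w_j |μ|^j / w(|μ|)` of `E`, rotated by the phase of `μ^j`.
-/

open scoped InnerProductSpace ComplexConjugate Matrix.Norms.L2Operator

section ToEuclideanCLM

variable {𝕜 n : Type*} [RCLike 𝕜] [Fintype n] [DecidableEq n] {H : Matrix n n 𝕜}

lemma Matrix.IsHermitian.toEuclideanCLM_eigenvectorBasis (hH : H.IsHermitian) (i : n) :
    toEuclideanCLM (𝕜 := 𝕜) H (hH.eigenvectorBasis i) =
      (hH.eigenvalues i : 𝕜) • hH.eigenvectorBasis i := by
  apply WithLp.ofLp_injective
  rw [ofLp_toEuclideanCLM, hH.mulVec_eigenvectorBasis, RCLike.real_smul_eq_coe_smul (K := 𝕜)]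
  rfl

lemma Matrix.IsHermitian.re_inner_toEuclideanCLM_apply (hH : H.IsHermitian)
    (x : EuclideanSpace 𝕜 n) :
    RCLike.re ⟪x, toEuclideanCLM (𝕜 := 𝕜) H x⟫_𝕜 =
      ∑ i, hH.eigenvalues i * ‖⟪hH.eigenvectorBasis i, x⟫_𝕜‖ ^ 2 := by
  set b := hH.eigenvectorBasis
  have hcoord (i : n) : ⟪b i, toEuclideanCLM (𝕜 := 𝕜) H x⟫_𝕜 = hH.eigenvalues i * ⟪b i, x⟫_𝕜 := by
    calc ⟪b i, toEuclideanCLM (𝕜 := 𝕜) H x⟫_𝕜 = ⟪toEuclideanCLM (𝕜 := 𝕜) H (b i), x⟫_𝕜 :=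
          (isSymmetric_toEuclideanLin_iff.mpr hH (b i) x).symm
      _ = hH.eigenvalues i * ⟪b i, x⟫_𝕜 := by
          rw [hH.toEuclideanCLM_eigenvectorBasis, inner_smul_left, RCLike.conj_ofReal]
  rw [← b.sum_inner_mul_inner, map_sum]
  refine sum_congr rfl fun i _ => ?_
  rw [hcoord, ← inner_conj_symm x, mul_left_comm, RCLike.conj_mul, ← RCLike.ofReal_pow,
    ← RCLike.ofReal_mul, RCLike.ofReal_re]

lemma Matrix.IsHermitian.mul_norm_sq_le_re_inner_toEuclideanCLM_apply (hH : H.IsHermitian)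
    {c : ℝ} (hc : ∀ i, c ≤ hH.eigenvalues i) (x : EuclideanSpace 𝕜 n) :
    c * ‖x‖ ^ 2 ≤ RCLike.re ⟪x, toEuclideanCLM (𝕜 := 𝕜) H x⟫_𝕜 := by
  rw [hH.re_inner_toEuclideanCLM_apply, ← hH.eigenvectorBasis.sum_sq_norm_inner_right, mul_sum]
  gcongr with i
  exact hc i

lemma Matrix.norm_toEuclideanCLM_apply_sq (A : Matrix n n 𝕜) (x : EuclideanSpace 𝕜 n) :
    ‖toEuclideanCLM (𝕜 := 𝕜) A x‖ ^ 2 = RCLike.re ⟪x, toEuclideanCLM (𝕜 := 𝕜) (Aᴴ * A) x⟫_𝕜 := by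
  rw [ContinuousLinearMap.apply_norm_sq_eq_inner_adjoint_right, map_mul, ← star_eq_conjTranspose,
    map_star, ContinuousLinearMap.star_eq_adjoint]
  rfl

lemma Matrix.norm_toEuclideanCLM_eigenvectorBasis_sq (A : Matrix n n 𝕜) (i : n) :
    ‖toEuclideanCLM (𝕜 := 𝕜) A ((isHermitian_conjTranspose_mul_self A).eigenvectorBasis i)‖ ^ 2 =
      (isHermitian_conjTranspose_mul_self A).eigenvalues i := by
  rw [norm_toEuclideanCLM_apply_sq, IsHermitian.toEuclideanCLM_eigenvectorBasis, inner_smul_right,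
    inner_self_eq_norm_sq_to_K, (isHermitian_conjTranspose_mul_self A).eigenvectorBasis.norm_eq_one]
  simp

lemma Matrix.det_eq_zero_iff_exists_toEuclideanCLM_apply_eq_zero {M : Matrix n n 𝕜} :
    M.det = 0 ↔ ∃ x ≠ 0, toEuclideanCLM (𝕜 := 𝕜) M x = 0 := by
  rw [← exists_mulVec_eq_zero_iff]
  constructor
  · rintro ⟨v, hv, hMv⟩
    exact ⟨WithLp.toLp 2 v, by simpa using hv, by simp [toEuclideanCLM_toLp, hMv]⟩
  · rintro ⟨x, hx, hMx⟩
    exact ⟨WithLp.ofLp x, by simpa using hx,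
      by simpa [← ofLp_toEuclideanCLM] using congrArg WithLp.ofLp hMx⟩

end ToEuclideanCLM

lemma Tuple.apply_sort_zero_le {M : ℕ} (f : Fin (M + 1) → ℝ) (i : Fin (M + 1)) :
    f (Tuple.sort f 0) ≤ f i := by
  simpa using Tuple.monotone_sort f (Fin.zero_le ((Tuple.sort f).symm i))

section SmallestSingularValue

variable {N : ℕ} (A : Matrix (Fin (N + 1)) (Fin (N + 1)) ℂ)

lemma sMin_nonneg : 0 ≤ sMin A :=
  Real.sqrt_nonneg _

lemma sq_sMin : sMin A ^ 2 = (isHermitian_conjTranspose_mul_self A).eigenvalues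
    (Tuple.sort (isHermitian_conjTranspose_mul_self A).eigenvalues 0) := by
  rw [sMin, svals, Fin.rev_last, Real.sq_sqrt (eigenvalues_conjTranspose_mul_self_nonneg A _)]

lemma sMin_mul_norm_le (x : EuclideanSpace ℂ (Fin (N + 1))) :
    sMin A * ‖x‖ ≤ ‖toEuclideanCLM (𝕜 := ℂ) A x‖ := by
  rw [← pow_le_pow_iff_left₀ (mul_nonneg (sMin_nonneg A) (norm_nonneg x)) (norm_nonneg _)
    two_ne_zero, mul_pow, sq_sMin, norm_toEuclideanCLM_apply_sq]
  exact (isHermitian_conjTranspose_mul_self A).mul_norm_sq_le_re_inner_toEuclideanCLM_apply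
    (Tuple.apply_sort_zero_le _) x

lemma exists_norm_eq_one_norm_toEuclideanCLM_apply_eq_sMin :
    ∃ x : EuclideanSpace ℂ (Fin (N + 1)), ‖x‖ = 1 ∧ ‖toEuclideanCLM (𝕜 := ℂ) A x‖ = sMin A := by
  set hAA := isHermitian_conjTranspose_mul_self A
  refine ⟨hAA.eigenvectorBasis (Tuple.sort hAA.eigenvalues 0),
    hAA.eigenvectorBasis.norm_eq_one _, ?_⟩
  rw [← pow_left_inj₀ (norm_nonneg _) (sMin_nonneg A) two_ne_zero,
    norm_toEuclideanCLM_eigenvectorBasis_sq, sq_sMin]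

lemma sMin_le_norm_of_det_add_eq_zero {E : Matrix (Fin (N + 1)) (Fin (N + 1)) ℂ}
    (h : (A + E).det = 0) : sMin A ≤ ‖E‖ := by
  obtain ⟨x, hx, hAEx⟩ := det_eq_zero_iff_exists_toEuclideanCLM_apply_eq_zero.mp h
  rw [map_add, _root_.add_apply] at hAEx
  refine le_of_mul_le_mul_right ?_ (norm_pos_iff.mpr hx)
  calc sMin A * ‖x‖ ≤ ‖toEuclideanCLM (𝕜 := ℂ) A x‖ := sMin_mul_norm_le A x
    _ = ‖toEuclideanCLM (𝕜 := ℂ) E x‖ := by rw [eq_neg_of_add_eq_zero_left hAEx, norm_neg]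
    _ ≤ ‖E‖ * ‖x‖ := (toEuclideanCLM (𝕜 := ℂ) E).le_opNorm x

lemma exists_norm_le_sMin_det_add_eq_zero :
    ∃ E : Matrix (Fin (N + 1)) (Fin (N + 1)) ℂ, ‖E‖ ≤ sMin A ∧ (A + E).det = 0 := by
  obtain ⟨x, hx, hAx⟩ := exists_norm_eq_one_norm_toEuclideanCLM_apply_eq_sMin A
  set T := toEuclideanCLM (𝕜 := ℂ) A
  refine ⟨(toEuclideanCLM (𝕜 := ℂ) (n := Fin (N + 1))).symm (-(innerSL ℂ x).smulRight (T x)),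
    ?_, ?_⟩
  · rw [cstar_norm_def, StarAlgEquiv.apply_symm_apply, norm_neg,
      ContinuousLinearMap.norm_smulRight_apply, innerSL_apply_norm, hx, one_mul, hAx]
  · refine det_eq_zero_iff_exists_toEuclideanCLM_apply_eq_zero.mpr
      ⟨x, by rintro rfl; simp at hx, ?_⟩
    rw [map_add, StarAlgEquiv.apply_symm_apply, _root_.add_apply,
      _root_.neg_apply, ContinuousLinearMap.smulRight_apply, innerSL_apply_apply,
      inner_self_eq_norm_sq_to_K, hx]
    simp [T]

lemma sMin_le_iff_exists_det_add_eq_zero (r : ℝ) :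
    sMin A ≤ r ↔ ∃ E : Matrix (Fin (N + 1)) (Fin (N + 1)) ℂ, ‖E‖ ≤ r ∧ (A + E).det = 0 := by
  constructor
  · intro h
    obtain ⟨E, hE, hdet⟩ := exists_norm_le_sMin_det_add_eq_zero A
    exact ⟨E, hE.trans h, hdet⟩
  · rintro ⟨E, hE, hdet⟩
    exact (sMin_le_norm_of_det_add_eq_zero A hdet).trans hE

end SmallestSingularValue

lemma RCLike.mul_conj_div_norm {𝕜 : Type*} [RCLike 𝕜] (z : 𝕜) : z * (conj z / ‖z‖) = ‖z‖ := by
  rcases eq_or_ne z 0 with rfl | hz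
  · simp
  · rw [← mul_div_assoc, RCLike.mul_conj, pow_two,
      mul_div_cancel_right₀ _ (RCLike.ofReal_ne_zero.mpr (norm_ne_zero_iff.mpr hz))]

lemma exists_sum_smul_eq_iff_norm_le {𝕜 F ι : Type*} [RCLike 𝕜] [NormedAddCommGroup F]
    [NormedSpace 𝕜 F] [Fintype ι] {a : ι → 𝕜} {w : ι → ℝ} (hw : ∀ i, 0 ≤ w i)
    (hW : 0 < ∑ i, w i * ‖a i‖) (ε : ℝ) (E : F) :
    (∃ Δ : ι → F, (∀ i, ‖Δ i‖ ≤ ε * w i) ∧ ∑ i, a i • Δ i = E) ↔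
      ‖E‖ ≤ ε * ∑ i, w i * ‖a i‖ := by
  set W := ∑ i, w i * ‖a i‖
  constructor
  · rintro ⟨Δ, hΔ, rfl⟩
    calc ‖∑ i, a i • Δ i‖ ≤ ∑ i, ‖a i‖ * ‖Δ i‖ := norm_sum_le_of_le _ fun i _ => norm_smul_le _ _
      _ ≤ ∑ i, ‖a i‖ * (ε * w i) := by gcongr with i; exact hΔ i
      _ = ε * W := by rw [mul_sum]; exact sum_congr rfl fun i _ => by ring
  · intro hE
    let c (i : ι) : 𝕜 := (w i / W : ℝ) * (conj (a i) / ‖a i‖)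
    have hc (i : ι) : ‖c i‖ ≤ w i / W := by
      rw [norm_mul, RCLike.norm_ofReal, abs_of_nonneg (div_nonneg (hw i) hW.le), norm_div,
        RCLike.norm_conj, RCLike.norm_ofReal, abs_norm]
      exact mul_le_of_le_one_right (div_nonneg (hw i) hW.le) (div_self_le_one _)
    have hac : ∑ i, a i * c i = 1 := by
      have hterm (i : ι) : a i * c i = ((w i * ‖a i‖ / W : ℝ) : 𝕜) := by
        rw [mul_left_comm, RCLike.mul_conj_div_norm]
        push_cast
        ring
      rw [sum_congr rfl fun i _ => hterm i, ← RCLike.ofReal_sum, ← sum_div, div_self hW.ne',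
        RCLike.ofReal_one]
    refine ⟨fun i => c i • E, fun i => ?_, ?_⟩
    · calc ‖c i • E‖ = ‖c i‖ * ‖E‖ := norm_smul _ _
        _ ≤ w i / W * (ε * W) := mul_le_mul (hc i) hE (norm_nonneg E) (div_nonneg (hw i) hW.le)
        _ = ε * w i := by field_simp
    · simp_rw [smul_smul, ← sum_smul, hac, one_smul]

lemma wEval_pos {m : ℕ} {w : Fin (m + 1) → ℝ} (hw : ∀ j, 0 ≤ w j) (hw0 : 0 < w 0) {x : ℝ}
    (hx : 0 ≤ x) : 0 < wEval w x :=
  sum_pos' (fun j _ => mul_nonneg (hw j) (pow_nonneg hx _)) ⟨0, mem_univ _, by simpa using hw0⟩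

lemma specNorm_eq_norm {N : ℕ} (A : Matrix (Fin N) (Fin N) ℂ) : specNorm A = ‖A‖ :=
  rfl

theorem stmt10_general {n m : ℕ} (P : Fin (m + 1) → Matrix (Fin (n + 1)) (Fin (n + 1)) ℂ)
    (w : Fin (m + 1) → ℝ) (hw : ∀ j, 0 ≤ w j) (hw0 : 0 < w 0) (ε : ℝ)
    (μ : ℂ) :
    sMin (polyEval P μ) ≤ ε * wEval w (‖μ‖) ↔
      ∃ Δ : Fin (m + 1) → Matrix (Fin (n + 1)) (Fin (n + 1)) ℂ,
        (∀ j, specNorm (Δ j) ≤ ε * w j) ∧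
          (∑ j : Fin (m + 1), μ ^ (j : ℕ) • (P j + Δ j)).det = 0 := by
  have hW : wEval w ‖μ‖ = ∑ j, w j * ‖μ ^ (j : ℕ)‖ := by simp only [wEval, norm_pow]
  have hW_pos : 0 < ∑ j, w j * ‖μ ^ (j : ℕ)‖ := hW ▸ wEval_pos hw hw0 (norm_nonneg μ)
  have hsplit (Δ : Fin (m + 1) → Matrix (Fin (n + 1)) (Fin (n + 1)) ℂ) :
      ∑ j : Fin (m + 1), μ ^ (j : ℕ) • (P j + Δ j) =
        polyEval P μ + ∑ j : Fin (m + 1), μ ^ (j : ℕ) • Δ j := by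
    simp only [polyEval, smul_add, sum_add_distrib]
  simp_rw [specNorm_eq_norm, hsplit, sMin_le_iff_exists_det_add_eq_zero, hW,
    ← exists_sum_smul_eq_iff_norm_le hw hW_pos]
  constructor
  · rintro ⟨_, ⟨Δ, hΔ, rfl⟩, hdet⟩
    exact ⟨Δ, hΔ, hdet⟩
  · rintro ⟨Δ, hΔ, hdet⟩
    exact ⟨_, ⟨Δ, hΔ, rfl⟩, hdet⟩

/-- Tisseur–Higham. `s_n(P(μ)) ≤ ε w(|μ|)` iff `μ` is an eigenvalue of
some perturbation `Q(λ) = Σ (P_j + Δ_j) λ^j` with `‖Δ_j‖ ≤ ε w_j` for all `j`. -/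
theorem stmt10 {n m : ℕ} (P : Fin (m + 1) → Matrix (Fin (n + 1)) (Fin (n + 1)) ℂ)
    (w : Fin (m + 1) → ℝ) (hw : ∀ j, 0 ≤ w j) (hw0 : 0 < w 0) (ε : ℝ) (hε : 0 ≤ ε)
    (μ : ℂ) :
    sMin (polyEval P μ) ≤ ε * wEval w (‖μ‖) ↔
      ∃ Δ : Fin (m + 1) → Matrix (Fin (n + 1)) (Fin (n + 1)) ℂ,
        (∀ j, specNorm (Δ j) ≤ ε * w j) ∧
          (∑ j : Fin (m + 1), μ ^ (j : ℕ) • (P j + Δ j)).det = 0 :=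
  stmt10_general P w hw hw0 ε μ
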